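/- arXiv:1301.5655 — 4 statements merged into one kernel-verified Lean document; each statement's English description precedes it below -/
import Mathlib

section
/- Let F_q be the finite field with q elements and let G_I, G_{O/I}, B^n be mutually independent and uniformly distributed on F_q^{k×n}, F_q^{l×n}, F_q^n, with codewords V^n(a^k,m^l) = a^k G_I ⊕ m^l G_{O/I} ⊕ B^n. If m^l ≠ m̂^l, then for every â^k ∈ F_q^k the F_q^k-indexed family (V^n(a^k,m^l))_{a^k ∈ F_q^k} is statistically independent of V^n(â^k,m̂^l): for every choice of vectors v^n_{a^k} ∈ F_q^n (a^k ∈ F_q^k) and v̂^n ∈ F_q^n, P(V^n(a^k,m^l) = v^n_{a^k} for all a^k, and V^n(â^k,m̂^l) = v̂^n) = P(V^n(a^k,m^l) = v^n_{a^k} for all a^k) · P(V^n(â^k,m̂^l) = v̂^n). -/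
open scoped BigOperators Classical

noncomputable section

namespace Stmt14

/-- Sample space of a random `(n,k,l)` nested coset code over `F`:
`(G_I, G_{O/I}, B^n)` uniformly distributed on this product space (equivalently, the
three components are mutually independent and uniform). -/
abbrev Ω (F : Type) (k l n : ℕ) : Type :=
  (Fin k → Fin n → F) × (Fin l → Fin n → F) × (Fin n → F)

/-- The random codeword `V^n(a^k, m^l) = a^k G_I ⊕ m^l G_{O/I} ⊕ B^n`. -/
def cw {F : Type} [Field F] {k l n : ℕ} (ω : Ω F k l n)
    (a : Fin k → F) (m : Fin l → F) : Fin n → F :=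
  fun t => (∑ i, a i * ω.1 i t) + (∑ j, m j * ω.2.1 j t) + ω.2.2 t

/-- Probability of an event under the uniform distribution on `Ω F k l n`. -/
def pr {F : Type} [Fintype F] {k l n : ℕ} (E : Ω F k l n → Prop) : ℝ :=
  (Nat.card {ω : Ω F k l n // E ω} : ℝ) / (Nat.card (Ω F k l n) : ℝ)

set_option maxHeartbeats 1000000 in
/-- Any coset of a random nested coset code is statistically independent of any codeword
belonging to a different coset. -/
theorem coset_independent_of_codeword_in_different_coset
    (F : Type) [Field F] [Fintype F] (k l n : ℕ)
    (m mhat : Fin l → F) (hm : m ≠ mhat) (ahat : Fin k → F)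
    (va : (Fin k → F) → (Fin n → F)) (vhat : Fin n → F) :
    pr (fun ω : Ω F k l n => (∀ a : Fin k → F, cw ω a m = va a) ∧ cw ω ahat mhat = vhat) =
      pr (fun ω : Ω F k l n => ∀ a : Fin k → F, cw ω a m = va a) *
        pr (fun ω : Ω F k l n => cw ω ahat mhat = vhat) := by
  classical
  obtain ⟨j0, hj0'⟩ := Function.ne_iff.mp hm
  have hj0 : mhat j0 - m j0 ≠ 0 := sub_ne_zero.mpr (Ne.symm hj0')
  -- the linear map `G₂ ↦ (m̂ - m)·G₂` and a section of it
  set φ : (Fin l → Fin n → F) → (Fin n → F) :=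
    fun g t => ∑ j, (mhat j - m j) * g j t with hφ
  set σ : (Fin n → F) → (Fin l → Fin n → F) :=
    fun w j t => if j = j0 then (mhat j0 - m j0)⁻¹ * w t else 0 with hσ
  have hφσ : ∀ w, φ (σ w) = w := by
    intro w; funext t
    simp only [hφ, hσ, mul_ite, mul_zero]
    rw [Finset.sum_ite_eq' Finset.univ j0]
    simp [← mul_assoc, mul_inv_cancel₀ hj0]
  have hφadd : ∀ g h : Fin l → Fin n → F, φ (g + h) = φ g + φ h := by
    intro g h; funext t
    simp [hφ, mul_add, Finset.sum_add_distrib]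
  have hφsub : ∀ g h : Fin l → Fin n → F, φ (g - h) = φ g - φ h := by
    intro g h; funext t
    simp [hφ, mul_sub, Finset.sum_sub_distrib]
  -- the "kernel" and the inner-generator constraint set
  let K : Type := {g : Fin l → Fin n → F // φ g = 0}
  let S : Type := {gI : Fin k → Fin n → F //
      ∀ a : Fin k → F, ∀ t, (∑ i, a i * gI i t) = va a t - va 0 t}
  -- the target value of `φ G₂` forced by the two events, as a function of `G_I`
  let W : (Fin k → Fin n → F) → (Fin n → F) :=
    fun gI t => vhat t - va 0 t - ∑ i, ahat i * gI i t
  -- E4 : total space splits as K × (Fin n → F)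
  have E4 : (Fin l → Fin n → F) ≃ K × (Fin n → F) :=
    { toFun := fun g => (⟨g - σ (φ g), by rw [hφsub, hφσ, sub_self]⟩, φ g)
      invFun := fun p => p.1.1 + σ p.2
      left_inv := fun g => by simp
      right_inv := fun p => by
        have h1 : φ (p.1.1 + σ p.2) = p.2 := by
          rw [hφadd, p.1.2, hφσ, zero_add]
        refine Prod.ext (Subtype.ext ?_) h1
        simp only [h1, add_sub_cancel_right] }
  -- EB : event B bijects with (G_I, G₂) pairs
  have EB : {ω : Ω F k l n // cw ω ahat mhat = vhat} ≃
      (Fin k → Fin n → F) × (Fin l → Fin n → F) :=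
    { toFun := fun ω => (ω.1.1, ω.1.2.1)
      invFun := fun p => ⟨(p.1, p.2, fun t =>
          vhat t - ((∑ i, ahat i * p.1 i t) + ∑ j, mhat j * p.2 j t)), by
        funext t; simp [cw]⟩
      left_inv := fun ω => by
        apply Subtype.ext
        obtain ⟨⟨g1, g2, b⟩, hb⟩ := ω
        have : ∀ t, (∑ i, ahat i * g1 i t) + (∑ j, mhat j * g2 j t) + b t = vhat t :=
          fun t => congrFun hb t
        refine Prod.ext rfl (Prod.ext rfl ?_)
        funext t
        have := this t
        simp only []
        linear_combination -this
      right_inv := fun p => rfl }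
  -- EA : event A bijects with S × G₂
  have EA : {ω : Ω F k l n // ∀ a : Fin k → F, cw ω a m = va a} ≃
      S × (Fin l → Fin n → F) :=
    { toFun := fun ω =>
        (⟨ω.1.1, by
          intro a t
          have h1 := congrFun (ω.2 a) t
          have h0 := congrFun (ω.2 0) t
          simp [cw] at h1 h0
          linear_combination h1 - h0⟩, ω.1.2.1)
      invFun := fun p => ⟨(p.1.1, p.2, fun t => va 0 t - ∑ j, m j * p.2 j t), by
        intro a; funext t
        have := p.1.2 a t
        simp [cw]
        linear_combination this⟩
      left_inv := fun ω => by
        apply Subtype.ext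
        obtain ⟨⟨g1, g2, b⟩, hA⟩ := ω
        have h0 : ∀ t, (∑ i, (0:F) * g1 i t) + (∑ j, m j * g2 j t) + b t = va 0 t :=
          fun t => congrFun (hA 0) t
        refine Prod.ext rfl (Prod.ext rfl ?_)
        funext t
        have := h0 t
        simp only [zero_mul, Finset.sum_const_zero, zero_add] at this
        simp only []
        linear_combination -this
      right_inv := fun p => by
        apply Prod.ext
        · apply Subtype.ext; rfl
        · rfl }
  -- EAB : joint event bijects with S × K
  have EAB : {ω : Ω F k l n //
      (∀ a : Fin k → F, cw ω a m = va a) ∧ cw ω ahat mhat = vhat} ≃ S × K :=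
    { toFun := fun ω =>
        (⟨ω.1.1, by
          intro a t
          have h1 := congrFun (ω.2.1 a) t
          have h0 := congrFun (ω.2.1 0) t
          simp [cw] at h1 h0
          linear_combination h1 - h0⟩,
         ⟨ω.1.2.1 - σ (W ω.1.1), by
          have hw : φ ω.1.2.1 = W ω.1.1 := by
            funext t
            have h0 := congrFun (ω.2.1 0) t
            have hb := congrFun ω.2.2 t
            simp [cw] at h0 hb
            simp only [hφ, W, sub_mul, Finset.sum_sub_distrib]
            linear_combination hb - h0
          rw [hφsub, hw, hφσ, sub_self]⟩)
      invFun := fun p =>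
        ⟨(p.1.1, p.2.1 + σ (W p.1.1),
          fun t => va 0 t - ∑ j, m j * (p.2.1 + σ (W p.1.1)) j t), by
          have hφval : φ (p.2.1 + σ (W p.1.1)) = W p.1.1 := by
            rw [hφadd, p.2.2, hφσ, zero_add]
          constructor
          · intro a; funext t
            have := p.1.2 a t
            simp [cw]
            linear_combination this
          · funext t
            have hφt := congrFun hφval t
            simp only [hφ, W, sub_mul, Finset.sum_sub_distrib] at hφt
            simp [cw]
            linear_combination hφt⟩
      left_inv := fun ω => by
        apply Subtype.ext
        obtain ⟨⟨g1, g2, b⟩, hA, hB⟩ := ω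
        have h0 : ∀ t, (∑ j, m j * g2 j t) + b t = va 0 t := by
          intro t
          have := congrFun (hA 0) t
          simpa [cw] using this
        refine Prod.ext rfl (Prod.ext ?_ ?_)
        · simp only []
          abel
        · funext t
          simp only []
          have := h0 t
          rw [sub_add_cancel]
          linear_combination -this
      right_inv := fun p => by
        refine Prod.ext (Subtype.ext rfl) (Subtype.ext ?_)
        simp only []
        abel }
  -- cardinalities
  have hKcard : Nat.card (Fin l → Fin n → F) = Nat.card K * Nat.card (Fin n → F) := by
    rw [Nat.card_congr E4, Nat.card_prod]
  have hA : Nat.card {ω : Ω F k l n // ∀ a : Fin k → F, cw ω a m = va a}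
      = Nat.card S * Nat.card (Fin l → Fin n → F) := by
    rw [Nat.card_congr EA, Nat.card_prod]
  have hB : Nat.card {ω : Ω F k l n // cw ω ahat mhat = vhat}
      = Nat.card (Fin k → Fin n → F) * Nat.card (Fin l → Fin n → F) := by
    rw [Nat.card_congr EB, Nat.card_prod]
  have hAB : Nat.card {ω : Ω F k l n //
      (∀ a : Fin k → F, cw ω a m = va a) ∧ cw ω ahat mhat = vhat}
      = Nat.card S * Nat.card K := by
    rw [Nat.card_congr EAB, Nat.card_prod]
  have hΩ : Nat.card (Ω F k l n)
      = Nat.card (Fin k → Fin n → F) *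
        (Nat.card (Fin l → Fin n → F) * Nat.card (Fin n → F)) := by
    rw [Nat.card_prod, Nat.card_prod]
  -- positivity
  have hK0 : 0 < Nat.card K := by
    have : Nonempty K := ⟨⟨0, by funext t; simp [hφ]⟩⟩
    exact Nat.card_pos
  have hN0 : 0 < Nat.card (Fin n → F) := Nat.card_pos
  have hk0 : 0 < Nat.card (Fin k → Fin n → F) := Nat.card_pos
  have hK0' : (Nat.card K : ℝ) ≠ 0 := by positivity
  have hN0' : (Nat.card (Fin n → F) : ℝ) ≠ 0 := by positivity
  have hk0' : (Nat.card (Fin k → Fin n → F) : ℝ) ≠ 0 := by positivity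
  have key : ∀ x c qn qk : ℝ, c ≠ 0 → qn ≠ 0 → qk ≠ 0 →
      (x * c) / (qk * (c * qn * qn)) =
        (x * (c * qn)) / (qk * (c * qn * qn)) *
          ((qk * (c * qn)) / (qk * (c * qn * qn))) := by
    intro x c qn qk hc hqn hqk
    field_simp
  -- final computation
  unfold pr
  rw [hA, hB, hAB, hΩ, hKcard]
  push_cast
  exact key _ _ _ _ hK0' hN0' hk0'

end Stmt14
end
end

section
/- Let F_q be the finite field with q elements, l = l₁ + l₂, and let G_{O/I}, B₁^n, B₂^n be mutually independent and uniformly distributed on F_q^{l×n}, F_q^n, F_q^n. For m₁ ∈ F_q^{l₁}, m₂ ∈ F_q^{l₂} and m̂ = (m̂₁,m̂₂) ∈ F_q^{l₁}×F_q^{l₂}, define V₁^n(m₁) = [m₁ 0^{l₂}]·G_{O/I} ⊕ B₁^n, V₂^n(m₂) = [0^{l₁} m₂]·G_{O/I} ⊕ B₂^n, and V^n(m̂) = [m̂₁ m̂₂]·G_{O/I} ⊕ B₁^n ⊕ B₂^n. If (m₁,m₂) ≠ (m̂₁,m̂₂), then for every triple ν₁^n, ν₂^n, ν̂^n ∈ F_q^n: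 P(V₁^n(m₁) = ν₁^n, V₂^n(m₂) = ν₂^n, V^n(m̂) = ν̂^n) = P(V₁^n(m₁) = ν₁^n, V₂^n(m₂) = ν₂^n) · P(V^n(m̂) = ν̂^n), and this common value is q^{−3n}. -/
/-!
For fixed messages, `ω = (G, B₁, B₂) ↦ (V₁, V₂, V)` is an additive map. It is surjective once
`m̂ ≠ (m₁, m₂)`: `B₁` and `B₂` reach the first two coordinates freely, while
`V - V₁ - V₂ = ([m̂₁ m̂₂] - [m₁ m₂])·G` is a nonzero row vector times a free matrix, and such
products reach every vector. All fibers of a surjective homomorphism of finite groups have the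
same size, so the triple, the pair `(V₁, V₂)` and `V` alone hit any prescribed value with
probability `q^{-3n}`, `q^{-2n}` and `q^{-n}` respectively.
-/

open scoped BigOperators Classical

noncomputable section

namespace Stmt15

/-- Sample space: `(G_{O/I}, B₁^n, B₂^n)` uniformly distributed on this product space
(equivalently, mutually independent and uniform). -/
abbrev Ω (F : Type) (l n : ℕ) : Type :=
  (Fin l → Fin n → F) × (Fin n → F) × (Fin n → F)

/-- `V₁^n(m₁) = [m₁ 0^{l₂}]·G_{O/I} ⊕ B₁^n`. -/
def V1 {F : Type} [Field F] {l1 l2 n : ℕ} (ω : Ω F (l1 + l2) n)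
    (m1 : Fin l1 → F) : Fin n → F :=
  fun t => (∑ j, Fin.append m1 (0 : Fin l2 → F) j * ω.1 j t) + ω.2.1 t

/-- `V₂^n(m₂) = [0^{l₁} m₂]·G_{O/I} ⊕ B₂^n`. -/
def V2 {F : Type} [Field F] {l1 l2 n : ℕ} (ω : Ω F (l1 + l2) n)
    (m2 : Fin l2 → F) : Fin n → F :=
  fun t => (∑ j, Fin.append (0 : Fin l1 → F) m2 j * ω.1 j t) + ω.2.2 t

/-- `V^n(m̂) = [m̂₁ m̂₂]·G_{O/I} ⊕ B₁^n ⊕ B₂^n`. -/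
def Vhat {F : Type} [Field F] {l1 l2 n : ℕ} (ω : Ω F (l1 + l2) n)
    (mhat : (Fin l1 → F) × (Fin l2 → F)) : Fin n → F :=
  fun t => (∑ j, Fin.append mhat.1 mhat.2 j * ω.1 j t) + ω.2.1 t + ω.2.2 t

/-- Probability of an event under the uniform distribution on `Ω F l n`. -/
def pr {F : Type} [Fintype F] {l n : ℕ} (E : Ω F l n → Prop) : ℝ :=
  (Nat.card {ω : Ω F l n // E ω} : ℝ) / (Nat.card (Ω F l n) : ℝ)

end Stmt15

open Matrix

theorem AddMonoidHom.natCard_fiber_mul_natCard_of_surjective {A B : Type*} [AddGroup A]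
    [AddGroup B] {f : A →+ B} (hf : Function.Surjective f) (y : B) :
    Nat.card (f ⁻¹' {y}) * Nat.card B = Nat.card A := by
  rw [Nat.card_congr (f.fiberEquivKerOfSurjective hf y), ← AddSubgroup.card_top (G := B),
    ← f.range_eq_top_of_surjective hf, ← AddSubgroup.index_ker f, AddSubgroup.card_mul_index]

theorem Fin.append_zero_add_zero_append {α : Type*} [AddZeroClass α] {m n : ℕ}
    (u : Fin m → α) (v : Fin n → α) :
    Fin.append u 0 + Fin.append 0 v = Fin.append u v := by
  ext i
  refine Fin.addCases (fun i => ?_) (fun i => ?_) i <;> simp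

theorem Matrix.exists_vecMul_eq_of_ne_zero {K ι κ : Type*} [DivisionRing K] [Fintype ι]
    [DecidableEq ι] {d : ι → K} (hd : d ≠ 0) (c : κ → K) : ∃ G : Matrix ι κ K, d ᵥ* G = c := by
  obtain ⟨j, hj⟩ : ∃ j, d j ≠ 0 := Function.ne_iff.mp hd
  exact ⟨vecMulVec (Pi.single j (d j)⁻¹) c, by
    rw [vecMul_vecMulVec, dotProduct_single, mul_inv_cancel₀ hj, one_smul]⟩

namespace Stmt15

section

variable {R : Type} [Ring R] {l n : ℕ}

def cosetLeaderHom (u₁ u₂ u : Fin l → R) :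
    Ω R l n →+ (Fin n → R) × (Fin n → R) × (Fin n → R) where
  toFun ω := (u₁ ᵥ* ω.1 + ω.2.1, u₂ ᵥ* ω.1 + ω.2.2, u ᵥ* ω.1 + ω.2.1 + ω.2.2)
  map_zero' := by
    have h (u : Fin l → R) : u ᵥ* (0 : Fin l → Fin n → R) = 0 := vecMul_zero u
    simp [h]
  map_add' ω ω' := by
    have h (u : Fin l → R) (M N : Fin l → Fin n → R) : u ᵥ* (M + N) = u ᵥ* M + u ᵥ* N :=
      vecMul_add M N u
    simp only [Prod.fst_add, Prod.snd_add, h, Prod.mk_add_mk, Prod.mk.injEq]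
    exact ⟨add_add_add_comm .., add_add_add_comm .., by abel⟩

theorem cosetLeaderHom_surjective {K : Type} [DivisionRing K] {u₁ u₂ u : Fin l → K}
    (hu : u - u₁ - u₂ ≠ 0) : Function.Surjective (cosetLeaderHom (n := n) u₁ u₂ u) := by
  rintro ⟨a, b, c⟩
  obtain ⟨G, hG⟩ := exists_vecMul_eq_of_ne_zero hu (c - a - b)
  refine ⟨(G, a - u₁ ᵥ* G, b - u₂ ᵥ* G), ?_⟩
  simp only [cosetLeaderHom, AddMonoidHom.coe_mk, ZeroHom.coe_mk, Prod.mk.injEq]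
  rw [sub_vecMul, sub_vecMul] at hG
  refine ⟨by abel, by abel, ?_⟩
  calc u ᵥ* G + (a - u₁ ᵥ* G) + (b - u₂ ᵥ* G) = (u ᵥ* G - u₁ ᵥ* G - u₂ ᵥ* G) + a + b := by abel
    _ = c := by rw [hG]; abel

end

theorem pr_eq_one_div_natCard_of_surjective {F : Type} [Fintype F] [AddGroup F] {l n : ℕ}
    {B : Type} [AddGroup B] {f : Ω F l n →+ B} (hf : Function.Surjective f) (y : B) :
    pr (fun ω => f ω = y) = 1 / Nat.card B := by
  have hcard := f.natCard_fiber_mul_natCard_of_surjective hf y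
  have hΩ : Nat.card (Ω F l n) ≠ 0 := Nat.card_pos.ne'
  have hfib : Nat.card (f ⁻¹' {y}) ≠ 0 := left_ne_zero_of_mul (hcard ▸ hΩ)
  unfold pr
  rw [← hcard, Nat.cast_mul, one_div]
  exact div_mul_cancel_left₀ (Nat.cast_ne_zero.mpr hfib) _

theorem cosetLeaderHom_append_apply {F : Type} [Field F] {l1 l2 n : ℕ} (m1 : Fin l1 → F)
    (m2 : Fin l2 → F) (mhat : (Fin l1 → F) × (Fin l2 → F)) (ω : Ω F (l1 + l2) n) :
    cosetLeaderHom (Fin.append m1 0) (Fin.append 0 m2) (Fin.append mhat.1 mhat.2) ω =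
      (V1 ω m1, V2 ω m2, Vhat ω mhat) :=
  rfl

/-- Statistical independence of the coset leaders: if `(m₁,m₂) ≠ (m̂₁,m̂₂)` then the
triple event factors, and the joint probability is `q^{-3n}`. -/
theorem coset_leaders_independent
    (F : Type) [Field F] [Fintype F] (l1 l2 n : ℕ)
    (m1 : Fin l1 → F) (m2 : Fin l2 → F) (mhat : (Fin l1 → F) × (Fin l2 → F))
    (hm : (m1, m2) ≠ mhat)
    (ν1 ν2 νhat : Fin n → F) :
    pr (fun ω : Ω F (l1 + l2) n =>
        V1 ω m1 = ν1 ∧ V2 ω m2 = ν2 ∧ Vhat ω mhat = νhat) =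
      pr (fun ω : Ω F (l1 + l2) n => V1 ω m1 = ν1 ∧ V2 ω m2 = ν2) *
        pr (fun ω : Ω F (l1 + l2) n => Vhat ω mhat = νhat) ∧
    pr (fun ω : Ω F (l1 + l2) n =>
        V1 ω m1 = ν1 ∧ V2 ω m2 = ν2 ∧ Vhat ω mhat = νhat) =
      1 / (Fintype.card F : ℝ) ^ (3 * n) := by
  have hu : Fin.append mhat.1 mhat.2 - Fin.append m1 0 - Fin.append 0 m2 ≠ 0 := by
    rw [sub_sub, Fin.append_zero_add_zero_append, sub_ne_zero]
    exact fun h => hm ((Fin.appendEquiv l1 l2).injective h).symm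
  set f := cosetLeaderHom (n := n) (Fin.append m1 0) (Fin.append 0 m2) (Fin.append mhat.1 mhat.2)
  have hf : Function.Surjective f := cosetLeaderHom_surjective hu
  have h₃ := pr_eq_one_div_natCard_of_surjective hf (ν1, ν2, νhat)
  have h₂ := pr_eq_one_div_natCard_of_surjective
    (f := ((AddMonoidHom.id _).prodMap (AddMonoidHom.fst _ _)).comp f)
    ((Function.surjective_id.prodMap Prod.fst_surjective).comp hf) (ν1, ν2)
  have h₁ := pr_eq_one_div_natCard_of_surjective
    (f := ((AddMonoidHom.snd _ _).comp (AddMonoidHom.snd _ _)).comp f)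
    ((Prod.snd_surjective.comp Prod.snd_surjective).comp hf) νhat
  simp only [f, AddMonoidHom.comp_apply, cosetLeaderHom_append_apply, AddMonoidHom.coe_prodMap,
    AddMonoidHom.coe_fst, AddMonoidHom.coe_snd, AddMonoidHom.id_apply, Prod.map_apply,
    Prod.mk.injEq, Nat.card_eq_fintype_card, Fintype.card_prod, Fintype.card_fun,
    Fintype.card_fin, Nat.cast_mul, Nat.cast_pow] at h₁ h₂ h₃
  rw [h₁, h₂, h₃]
  constructor <;> ring

end Stmt15
end
end

section
/- Let F_q be the finite field with q elements, k₁ ≤ k₂, l = l₁ + l₂, and let G_{I₂}, G_{O/I}, B₁^n, B₂^n be mutually independent and uniformly distributed on F_q^{k₂×n}, F_q^{l×n}, F_q^n, F_q^n. Let G_{I₁} consist of the first k₁ rows of G_{I₂}, let g_{O₁/I₁} and g_{O₂/I₂} be the first l₁ and the last l₂ rows of G_{O/I}, and define V₁^n(a₁,m₁) = a₁G_{I₁} ⊕ m₁g_{O₁/I₁} ⊕ B₁^n for a₁ ∈ F_q^{k₁}, V₂^n(a₂,m₂) = a₂G_{I₂} ⊕ m₂g_{O₂/I₂} ⊕ B₂^n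 for a₂ ∈ F_q^{k₂}, and V^n(â,m̂) = âG_{I₂} ⊕ [m̂₁ m̂₂]G_{O/I} ⊕ B₁^n ⊕ B₂^n for â ∈ F_q^{k₂}, m̂ = (m̂₁,m̂₂). Then for every (m₁,m₂) ∈ F_q^{l₁}×F_q^{l₂}, every m̂ ≠ (m₁,m₂) and every â ∈ F_q^{k₂}, the pair of indexed families (C₁(m₁), C₂(m₂)) = ((V₁^n(a₁,m₁))_{a₁∈F_q^{k₁}}, (V₂^n(a₂,m₂))_{a₂∈F_q^{k₂}}) is statistically independent of V^n(â,m̂). -/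
open scoped BigOperators Classical

noncomputable section

namespace Stmt16

/-- Sample space: `(G_{I₂}, G_{O/I}, B₁^n, B₂^n)` uniformly distributed on this product
space (equivalently, mutually independent and uniform). -/
abbrev Ω (F : Type) (k2 l1 l2 n : ℕ) : Type :=
  (Fin k2 → Fin n → F) × (Fin (l1 + l2) → Fin n → F) × (Fin n → F) × (Fin n → F)

/-- `V₁^n(a₁,m₁) = a₁ G_{I₁} ⊕ m₁ g_{O₁/I₁} ⊕ B₁^n`, where `G_{I₁}` consists of the first
`k₁` rows of `G_{I₂}` and `g_{O₁/I₁}` of the first `l₁` rows of `G_{O/I}`. -/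
def V1 {F : Type} [Field F] {k1 k2 l1 l2 n : ℕ} (hk : k1 ≤ k2)
    (ω : Ω F k2 l1 l2 n) (a1 : Fin k1 → F) (m1 : Fin l1 → F) : Fin n → F :=
  fun t => (∑ i : Fin k1, a1 i * ω.1 (Fin.castLE hk i) t) +
    (∑ j : Fin l1, m1 j * ω.2.1 (Fin.castAdd l2 j) t) + ω.2.2.1 t

/-- `V₂^n(a₂,m₂) = a₂ G_{I₂} ⊕ m₂ g_{O₂/I₂} ⊕ B₂^n`, where `g_{O₂/I₂}` consists of the
last `l₂` rows of `G_{O/I}`. -/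
def V2 {F : Type} [Field F] {k2 l1 l2 n : ℕ}
    (ω : Ω F k2 l1 l2 n) (a2 : Fin k2 → F) (m2 : Fin l2 → F) : Fin n → F :=
  fun t => (∑ i : Fin k2, a2 i * ω.1 i t) +
    (∑ j : Fin l2, m2 j * ω.2.1 (Fin.natAdd l1 j) t) + ω.2.2.2 t

/-- `V^n(â,m̂) = â G_{I₂} ⊕ [m̂₁ m̂₂] G_{O/I} ⊕ B₁^n ⊕ B₂^n`. -/
def Vhat {F : Type} [Field F] {k2 l1 l2 n : ℕ}
    (ω : Ω F k2 l1 l2 n) (ahat : Fin k2 → F)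
    (mhat : (Fin l1 → F) × (Fin l2 → F)) : Fin n → F :=
  fun t => (∑ i : Fin k2, ahat i * ω.1 i t) +
    (∑ j : Fin (l1 + l2), Fin.append mhat.1 mhat.2 j * ω.2.1 j t) + ω.2.2.1 t + ω.2.2.2 t

/-- Probability of an event under the uniform distribution on `Ω F k2 l1 l2 n`. -/
def pr {F : Type} [Fintype F] {k2 l1 l2 n : ℕ} (E : Ω F k2 l1 l2 n → Prop) : ℝ :=
  (Nat.card {ω : Ω F k2 l1 l2 n // E ω} : ℝ) / (Nat.card (Ω F k2 l1 l2 n) : ℝ)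

section Aux

variable {F : Type} [Field F] {k1 k2 l1 l2 n : ℕ}

def shiftΩ (m1 : Fin l1 → F) (m2 : Fin l2 → F) (j0 : Fin (l1 + l2))
    (ω : Ω F k2 l1 l2 n) (Δ : Fin n → F) : Ω F k2 l1 l2 n :=
  (ω.1,
   fun j t => ω.2.1 j t + (if j = j0 then Δ t else 0),
   fun t => ω.2.2.1 t - ∑ j : Fin l1, m1 j * (if Fin.castAdd l2 j = j0 then Δ t else 0),
   fun t => ω.2.2.2 t - ∑ j : Fin l2, m2 j * (if Fin.natAdd l1 j = j0 then Δ t else 0))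

lemma shift_zero (m1 : Fin l1 → F) (m2 : Fin l2 → F) (j0 : Fin (l1 + l2))
    (ω : Ω F k2 l1 l2 n) : shiftΩ m1 m2 j0 ω (fun _ => 0) = ω := by
  obtain ⟨G, H, B1, B2⟩ := ω
  simp [shiftΩ]

lemma shift_shift (m1 : Fin l1 → F) (m2 : Fin l2 → F) (j0 : Fin (l1 + l2))
    (ω : Ω F k2 l1 l2 n) (Δ1 Δ2 : Fin n → F) :
    shiftΩ m1 m2 j0 (shiftΩ m1 m2 j0 ω Δ1) Δ2
      = shiftΩ m1 m2 j0 ω (fun t => Δ1 t + Δ2 t) := by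
  obtain ⟨G, H, B1, B2⟩ := ω
  simp only [shiftΩ, Prod.mk.injEq]
  refine ⟨trivial, ?_, ?_, ?_⟩
  · funext j t; split_ifs <;> ring
  · funext t
    rw [sub_sub, ← Finset.sum_add_distrib]
    congr 1
    refine Finset.sum_congr rfl fun j _ => ?_
    split_ifs <;> ring
  · funext t
    rw [sub_sub, ← Finset.sum_add_distrib]
    congr 1
    refine Finset.sum_congr rfl fun j _ => ?_
    split_ifs <;> ring

lemma V1_shift (hk : k1 ≤ k2) (m1 : Fin l1 → F) (m2 : Fin l2 → F) (j0 : Fin (l1 + l2))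
    (ω : Ω F k2 l1 l2 n) (Δ : Fin n → F) (a1 : Fin k1 → F) :
    V1 hk (shiftΩ m1 m2 j0 ω Δ) a1 m1 = V1 hk ω a1 m1 := by
  obtain ⟨G, H, B1, B2⟩ := ω
  funext t
  simp only [V1, shiftΩ, mul_add, Finset.sum_add_distrib]
  ring

lemma V2_shift (m1 : Fin l1 → F) (m2 : Fin l2 → F) (j0 : Fin (l1 + l2))
    (ω : Ω F k2 l1 l2 n) (Δ : Fin n → F) (a2 : Fin k2 → F) :
    V2 (shiftΩ m1 m2 j0 ω Δ) a2 m2 = V2 ω a2 m2 := by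
  obtain ⟨G, H, B1, B2⟩ := ω
  funext t
  simp only [V2, shiftΩ, mul_add, Finset.sum_add_distrib]
  ring

lemma sum_append_ite (m1 : Fin l1 → F) (m2 : Fin l2 → F) (j0 : Fin (l1 + l2)) (x : F) :
    (∑ j : Fin l1, m1 j * (if Fin.castAdd l2 j = j0 then x else 0))
      + (∑ j : Fin l2, m2 j * (if Fin.natAdd l1 j = j0 then x else 0))
      = Fin.append m1 m2 j0 * x := by
  have h := (Fin.sum_univ_add
    (f := fun j : Fin (l1 + l2) => Fin.append m1 m2 j * (if j = j0 then x else 0))).symm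
  simp only [Fin.append_left, Fin.append_right] at h
  rw [h]
  simp [mul_ite, mul_zero, Finset.sum_ite_eq']

lemma Vhat_shift (m1 : Fin l1 → F) (m2 : Fin l2 → F) (j0 : Fin (l1 + l2))
    (ω : Ω F k2 l1 l2 n) (Δ : Fin n → F) (ahat : Fin k2 → F)
    (mhat : (Fin l1 → F) × (Fin l2 → F)) :
    Vhat (shiftΩ m1 m2 j0 ω Δ) ahat mhat
      = fun t => Vhat ω ahat mhat t
          + (Fin.append mhat.1 mhat.2 j0 - Fin.append m1 m2 j0) * Δ t := by
  obtain ⟨G, H, B1, B2⟩ := ω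
  funext t
  have h1 := sum_append_ite m1 m2 j0 (Δ t)
  have h2 : ∑ j : Fin (l1 + l2), Fin.append mhat.1 mhat.2 j * (if j = j0 then Δ t else 0)
      = Fin.append mhat.1 mhat.2 j0 * Δ t := by
    simp [mul_ite, mul_zero, Finset.sum_ite_eq']
  simp only [Vhat, shiftΩ, mul_add, Finset.sum_add_distrib]
  linear_combination h2 - h1

end Aux

section Aux2

variable {F : Type} [Field F] {k1 k2 l1 l2 n : ℕ}

/-- `pr` only depends on the event up to logical equivalence. -/
lemma pr_congr [Fintype F] (E E' : Ω F k2 l1 l2 n → Prop) (h : ∀ ω, E ω ↔ E' ω) :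
    pr E = pr E' := by
  unfold pr
  rw [Nat.card_congr (Equiv.subtypeEquivRight h)]

/-- Abstract factorization principle from the two counting equivalences. -/
lemma pr_factor [Fintype F] (A B : Ω F k2 l1 l2 n → Prop)
    (e1 : Ω F k2 l1 l2 n ≃ {ω : Ω F k2 l1 l2 n // B ω} × (Fin n → F))
    (e2 : {ω : Ω F k2 l1 l2 n // A ω} ≃
      {ω : Ω F k2 l1 l2 n // A ω ∧ B ω} × (Fin n → F)) :
    pr (fun ω => A ω ∧ B ω) = pr A * pr B := by
  haveI hnF : Nonempty F := ⟨0⟩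
  have hN : (Nat.card (Ω F k2 l1 l2 n) : ℝ) ≠ 0 := by
    exact_mod_cast Nat.card_pos.ne'
  have hQ : (Nat.card (Fin n → F) : ℝ) ≠ 0 := by
    exact_mod_cast Nat.card_pos.ne'
  have h1 : (Nat.card (Ω F k2 l1 l2 n) : ℝ)
      = (Nat.card {ω : Ω F k2 l1 l2 n // B ω} : ℝ) * (Nat.card (Fin n → F) : ℝ) := by
    rw [Nat.card_congr e1, Nat.card_prod]; push_cast; ring
  have h2 : (Nat.card {ω : Ω F k2 l1 l2 n // A ω} : ℝ)
      = (Nat.card {ω : Ω F k2 l1 l2 n // A ω ∧ B ω} : ℝ) * (Nat.card (Fin n → F) : ℝ) := by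
    rw [Nat.card_congr e2, Nat.card_prod]; push_cast; ring
  have hB : (Nat.card {ω : Ω F k2 l1 l2 n // B ω} : ℝ) ≠ 0 := by
    intro h0
    apply hN
    rw [h1, h0, zero_mul]
  have hD : (Nat.card {ω : Ω F k2 l1 l2 n // B ω} : ℝ) * (Nat.card (Fin n → F) : ℝ) ≠ 0 :=
    mul_ne_zero hB hQ
  unfold pr
  rw [h2, h1, div_mul_div_comm, div_eq_div_iff hD (mul_ne_zero hD hD)]
  ring

/-- `Ω ≃ {Vhat = νhat} × (Fin n → F)` : the codeword event has probability `q^{-n}`. -/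
def e1Equiv (ahat : Fin k2 → F) (mhat : (Fin l1 → F) × (Fin l2 → F)) (νhat : Fin n → F) :
    Ω F k2 l1 l2 n ≃ {ω : Ω F k2 l1 l2 n // Vhat ω ahat mhat = νhat} × (Fin n → F) where
  toFun := fun ω =>
    (⟨(ω.1, ω.2.1,
        fun t => νhat t - ((∑ i : Fin k2, ahat i * ω.1 i t) +
          (∑ j : Fin (l1 + l2), Fin.append mhat.1 mhat.2 j * ω.2.1 j t) + ω.2.2.2 t),
        ω.2.2.2), by
      funext t
      simp only [Vhat]
      ring⟩, ω.2.2.1)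
  invFun := fun p => (p.1.1.1, p.1.1.2.1, p.2, p.1.1.2.2.2)
  left_inv := fun ω => rfl
  right_inv := fun p => by
    refine Prod.ext (Subtype.ext ?_) rfl
    obtain ⟨⟨⟨G, H, B1, B2⟩, hp⟩, w⟩ := p
    simp only
    refine Prod.ext rfl (Prod.ext rfl (Prod.ext ?_ rfl))
    funext t
    have h := congrFun hp t
    simp only [Vhat] at h
    simp only
    linear_combination -h

/-- The cosets event is independent of the codeword event : the shift `shiftΩ` gives
a bijection. -/
def e2Equiv (hk : k1 ≤ k2) (m1 : Fin l1 → F) (m2 : Fin l2 → F)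
    (mhat : (Fin l1 → F) × (Fin l2 → F)) (ahat : Fin k2 → F)
    (ν1 : (Fin k1 → F) → (Fin n → F)) (ν2 : (Fin k2 → F) → (Fin n → F))
    (νhat : Fin n → F) (j0 : Fin (l1 + l2))
    (hc : Fin.append mhat.1 mhat.2 j0 - Fin.append m1 m2 j0 ≠ 0) :
    {ω : Ω F k2 l1 l2 n //
        (∀ a1 : Fin k1 → F, V1 hk ω a1 m1 = ν1 a1) ∧
        (∀ a2 : Fin k2 → F, V2 ω a2 m2 = ν2 a2)} ≃
      {ω : Ω F k2 l1 l2 n //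
          ((∀ a1 : Fin k1 → F, V1 hk ω a1 m1 = ν1 a1) ∧
           (∀ a2 : Fin k2 → F, V2 ω a2 m2 = ν2 a2)) ∧
          Vhat ω ahat mhat = νhat} × (Fin n → F) where
  toFun := fun ω =>
    (⟨shiftΩ m1 m2 j0 ω.1 (fun t => (νhat t - Vhat ω.1 ahat mhat t) /
        (Fin.append mhat.1 mhat.2 j0 - Fin.append m1 m2 j0)), by
      refine ⟨⟨fun a1 => by rw [V1_shift]; exact ω.2.1 a1,
        fun a2 => by rw [V2_shift]; exact ω.2.2 a2⟩, ?_⟩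
      rw [Vhat_shift]
      funext t
      rw [mul_comm, div_mul_cancel₀ _ hc]
      ring⟩,
     fun t => ω.1.2.1 j0 t)
  invFun := fun p =>
    ⟨shiftΩ m1 m2 j0 p.1.1 (fun t => p.2 t - p.1.1.2.1 j0 t),
      ⟨fun a1 => by rw [V1_shift]; exact p.1.2.1.1 a1,
       fun a2 => by rw [V2_shift]; exact p.1.2.1.2 a2⟩⟩
  left_inv := fun ω => by
    apply Subtype.ext
    show shiftΩ m1 m2 j0 _ _ = ω.1
    rw [shift_shift]
    have harg : (fun t => (νhat t - Vhat ω.1 ahat mhat t) /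
        (Fin.append mhat.1 mhat.2 j0 - Fin.append m1 m2 j0) +
        (ω.1.2.1 j0 t - (shiftΩ m1 m2 j0 ω.1
          (fun t => (νhat t - Vhat ω.1 ahat mhat t) /
            (Fin.append mhat.1 mhat.2 j0 - Fin.append m1 m2 j0))).2.1 j0 t))
        = fun _ => (0 : F) := by
      funext t
      simp only [shiftΩ, if_true]
      ring
    rw [harg, shift_zero]
  right_inv := fun p => by
    obtain ⟨⟨ω', hω'⟩, w⟩ := p
    have hV : Vhat (shiftΩ m1 m2 j0 ω' (fun t => w t - ω'.2.1 j0 t)) ahat mhat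
        = fun t => νhat t + (Fin.append mhat.1 mhat.2 j0 - Fin.append m1 m2 j0)
            * (w t - ω'.2.1 j0 t) := by
      rw [Vhat_shift]
      funext t
      rw [congrFun hω'.2 t]
    refine Prod.ext (Subtype.ext ?_) ?_
    · show shiftΩ m1 m2 j0 _ _ = ω'
      rw [shift_shift]
      have harg : (fun t => (w t - ω'.2.1 j0 t) +
          (νhat t - Vhat (shiftΩ m1 m2 j0 ω' (fun t => w t - ω'.2.1 j0 t)) ahat mhat t) /
            (Fin.append mhat.1 mhat.2 j0 - Fin.append m1 m2 j0))
          = fun _ => (0 : F) := by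
        funext t
        rw [congrFun hV t]
        field_simp
        ring
      rw [harg, shift_zero]
    · show (fun t => (shiftΩ m1 m2 j0 ω' (fun t => w t - ω'.2.1 j0 t)).2.1 j0 t) = w
      funext t
      simp only [shiftΩ, if_true]
      ring

end Aux2
/-- The pair of cosets `(C₁(m₁), C₂(m₂))` corresponding to the message pair is
statistically independent of any codeword `V^n(â,m̂)` in a different "sum" coset. -/
theorem cosets_independent_of_codeword_in_different_sum_coset
    (F : Type) [Field F] [Fintype F] (k1 k2 l1 l2 n : ℕ) (hk : k1 ≤ k2)
    (m1 : Fin l1 → F) (m2 : Fin l2 → F) (mhat : (Fin l1 → F) × (Fin l2 → F))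
    (hm : mhat ≠ (m1, m2)) (ahat : Fin k2 → F)
    (ν1 : (Fin k1 → F) → (Fin n → F)) (ν2 : (Fin k2 → F) → (Fin n → F))
    (νhat : Fin n → F) :
    pr (fun ω : Ω F k2 l1 l2 n =>
        (∀ a1 : Fin k1 → F, V1 hk ω a1 m1 = ν1 a1) ∧
        (∀ a2 : Fin k2 → F, V2 ω a2 m2 = ν2 a2) ∧
        Vhat ω ahat mhat = νhat) =
      pr (fun ω : Ω F k2 l1 l2 n =>
          (∀ a1 : Fin k1 → F, V1 hk ω a1 m1 = ν1 a1) ∧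
          (∀ a2 : Fin k2 → F, V2 ω a2 m2 = ν2 a2)) *
        pr (fun ω : Ω F k2 l1 l2 n => Vhat ω ahat mhat = νhat) := by
  classical
  have hne : Fin.append mhat.1 mhat.2 ≠ Fin.append m1 m2 := by
    intro h
    apply hm
    have h1 : mhat.1 = m1 := by
      funext j
      have := congrFun h (Fin.castAdd l2 j)
      simpa [Fin.append_left] using this
    have h2 : mhat.2 = m2 := by
      funext j
      have := congrFun h (Fin.natAdd l1 j)
      simpa [Fin.append_right] using this
    exact Prod.ext h1 h2
  obtain ⟨j0, hj0⟩ := Function.ne_iff.mp hne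
  have hc : Fin.append mhat.1 mhat.2 j0 - Fin.append m1 m2 j0 ≠ 0 := sub_ne_zero.mpr hj0
  have hswap := pr_congr
    (fun ω : Ω F k2 l1 l2 n =>
      (∀ a1 : Fin k1 → F, V1 hk ω a1 m1 = ν1 a1) ∧
      (∀ a2 : Fin k2 → F, V2 ω a2 m2 = ν2 a2) ∧ Vhat ω ahat mhat = νhat)
    (fun ω : Ω F k2 l1 l2 n =>
      ((∀ a1 : Fin k1 → F, V1 hk ω a1 m1 = ν1 a1) ∧
       (∀ a2 : Fin k2 → F, V2 ω a2 m2 = ν2 a2)) ∧ Vhat ω ahat mhat = νhat)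
    (fun ω => by tauto)
  rw [hswap]
  exact pr_factor
    (fun ω : Ω F k2 l1 l2 n =>
      (∀ a1 : Fin k1 → F, V1 hk ω a1 m1 = ν1 a1) ∧
      (∀ a2 : Fin k2 → F, V2 ω a2 m2 = ν2 a2))
    (fun ω : Ω F k2 l1 l2 n => Vhat ω ahat mhat = νhat)
    (e1Equiv ahat mhat νhat)
    (e2Equiv hk m1 m2 mhat ahat ν1 ν2 νhat j0 hc)

end Stmt16
end
end

section
/- Let τ ∈ [0, 3/4]. Let S₁, S₂, X₁, X₂ be mutually independent ℤ₄-valued random variables with S₁, S₂ uniformly distributed, P(X_j = 0) = 1−τ and P(X_j = x) = τ/3 for x ∈ {1,2,3}, j = 1,2. Set V_j = X_j ⊞ S_j and Y = V₁ ⊞ V₂, where ⊞ is addition mod 4, and let ⊕ denote the operation on {0,1,2,3} given by bitwise XOR of the two-bit binary representations (i.e., the addition of ℤ₂×ℤ₂ under v ↦ (v mod 2, ⌊v/2⌋)). Then: (i) H(V_j|S_j) = −τ·log₂(τ/3) − (1−τ)·log₂(1−τ) for j = 1,2; (ii) V₁ and V₂ are independent and each uniform on ℤ₄; (iii) H(V₁⊕V₂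 | Y) = 1/2; and consequently min{H(V₁|S₁), H(V₂|S₂)} − H(V₁⊕V₂|Y) = −τ·log₂(τ/3) − (1−τ)·log₂(1−τ) − 1/2. -/
open scoped BigOperators Classical

noncomputable section

namespace Stmt18

/-- Shannon entropy (base 2) of a pmf on a finite alphabet. -/
def ent {α : Type*} [Fintype α] (p : α → ℝ) : ℝ := -∑ a, p a * Real.logb 2 (p a)

/-- Conditional entropy `H(A|B)` of a joint pmf on `α × β` (first given second). -/
def condEnt {α β : Type*} [Fintype α] [Fintype β] (p : α × β → ℝ) : ℝ :=
  ent p - ent (fun b => ∑ a, p (a, b))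

/-- Bitwise XOR on `{0,1,2,3}` via the two-bit binary representation, i.e. the addition
of `ℤ₂ × ℤ₂` under `v ↦ (v mod 2, ⌊v/2⌋)`. -/
def xor4 (a b : ZMod 4) : ZMod 4 := ((a.val ^^^ b.val : ℕ) : ZMod 4)

/-- Sample space: `(S₁, S₂, X₁, X₂)`, each `ℤ₄`-valued. -/
abbrev Ω : Type := ZMod 4 × ZMod 4 × ZMod 4 × ZMod 4

/-- Joint pmf of mutually independent `(S₁,S₂,X₁,X₂)` with `S₁,S₂` uniform,
`P(X_j = 0) = 1 − τ` and `P(X_j = x) = τ/3` for `x ≠ 0`. -/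
def μ (τ : ℝ) (ω : Ω) : ℝ :=
  (1 / 4) * (1 / 4) * (if ω.2.2.1 = 0 then 1 - τ else τ / 3) *
    (if ω.2.2.2 = 0 then 1 - τ else τ / 3)

/-- Pushforward pmf of a random variable `f` on `Ω` under `μ τ`. -/
def push (τ : ℝ) {α : Type*} [Fintype α] (f : Ω → α) : α → ℝ :=
  fun a => ∑ ω : Ω, if f ω = a then μ τ ω else 0

/-- `V_j = X_j ⊞ S_j` (mod-4 addition). -/
def V1 (ω : Ω) : ZMod 4 := ω.2.2.1 + ω.1
def V2 (ω : Ω) : ZMod 4 := ω.2.2.2 + ω.2.1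

/-- `Y = V₁ ⊞ V₂` (mod-4 addition). -/
def Yout (ω : Ω) : ZMod 4 := V1 ω + V2 ω

/-! Writing `(V_j, S_j) = (X_j + S_j, S_j)` is a change of variables on the sample space, so the law
of `((V₁, S₁), (V₂, S₂))` is the product of two copies of `(v, s) ↦ ¼ · P(X = v - s)`. Both
conditional entropies then follow from the chain rule `H(A | B) = ∑_b P(B = b) · H(A | B = b)`:
given `S_j = s`, `V_j` is a translate of `X_j`, so `H(V_j | S_j) = H(X_j)`; given `Y = y`, the
input `V₁` is uniform and `V₂ = y - V₁`, so `V₁ ⊕ V₂` is constant for odd `y` and a fair bit for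
even `y`, whence `H(V₁ ⊕ V₂ | Y) = ½`. -/

open Real

section Entropy

variable {α β : Type*} [Fintype α] [Fintype β]

lemma ent_eq_sum_negMulLog (p : α → ℝ) : ent p = (∑ a, negMulLog (p a)) / log 2 := by
  simp only [ent, negMulLog, logb, Finset.sum_div, ← Finset.sum_neg_distrib]
  congr 1 with a
  ring

lemma ent_comp_equiv (p : α → ℝ) (e : β ≃ α) : ent (p ∘ e) = ent p :=
  congrArg Neg.neg (e.sum_comp fun a => p a * logb 2 (p a))

lemma condEnt_mul_kernel (q : β → ℝ) (k : β → α → ℝ) (hk : ∀ b, ∑ a, k b a = 1) :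
    condEnt (fun p : α × β => q p.2 * k p.2 p.1) = ∑ b, q b * ent (k b) := by
  have hmarg : (fun b => ∑ a, q b * k b a) = q := by
    funext b
    rw [← Finset.mul_sum, hk, mul_one]
  have hjoint : ∑ p : α × β, negMulLog (q p.2 * k p.2 p.1)
      = ∑ b, negMulLog (q b) + ∑ b, q b * ∑ a, negMulLog (k b a) := by
    rw [Fintype.sum_prod_type_right, ← Finset.sum_add_distrib]
    refine Finset.sum_congr rfl fun b _ => ?_
    simp only [negMulLog_mul, Finset.sum_add_distrib, ← Finset.sum_mul, ← Finset.mul_sum, hk,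
      one_mul]
  simp only [condEnt, hmarg, ent_eq_sum_negMulLog, hjoint, ← mul_div_assoc, ← Finset.sum_div]
  ring

end Entropy

section Pushforward

variable {α β : Type*} [Fintype α] [Fintype β]

lemma push_comp [DecidableEq β] (τ : ℝ) (F : Ω → α) (g : α → β) (b : β) :
    push τ (fun ω => g (F ω)) b = ∑ a, if g a = b then push τ F a else 0 := by
  have hfiber (a : α) : (if g a = b then push τ F a else 0)
      = ∑ ω, if F ω = a then (if g a = b then μ τ ω else 0) else 0 := by
    by_cases h : g a = b <;> simp [push, h]
  simp only [hfiber]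
  rw [Finset.sum_comm]
  simp only [Fintype.sum_ite_eq]
  unfold push
  congr! 2

lemma push_equiv (τ : ℝ) (e : Ω ≃ α) (a : α) : push τ e a = μ τ (e.symm a) := by
  simp only [push, ← e.eq_symm_apply, Finset.sum_ite_eq', Finset.mem_univ, if_true]

end Pushforward

lemma ZMod.sum_univ_four {M : Type*} [AddCommMonoid M] (f : ZMod 4 → M) :
    ∑ x, f x = f 0 + f 1 + f 2 + f 3 :=
  Fin.sum_univ_four f

def noise (τ : ℝ) (x : ZMod 4) : ℝ := if x = 0 then 1 - τ else τ / 3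

lemma sum_noise (τ : ℝ) : ∑ x, noise τ x = 1 := by
  simp +decide only [noise, ZMod.sum_univ_four, ↓reduceIte]
  ring

lemma sum_noise_sub_right (τ : ℝ) (s : ZMod 4) : ∑ v, noise τ (v - s) = 1 := by
  rw [Fintype.sum_equiv (Equiv.subRight s) (fun v => noise τ (v - s)) _ fun _ => rfl, sum_noise]

lemma sum_noise_sub_left (τ : ℝ) (v : ZMod 4) : ∑ s, noise τ (v - s) = 1 := by
  rw [Fintype.sum_equiv (Equiv.subLeft v) (fun s => noise τ (v - s)) _ fun _ => rfl, sum_noise]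

lemma ent_noise (τ : ℝ) :
    ent (noise τ) = -(τ * logb 2 (τ / 3)) - (1 - τ) * logb 2 (1 - τ) := by
  simp +decide only [ent, noise, ite_mul, ZMod.sum_univ_four, ↓reduceIte]
  ring

def channelLaw (τ : ℝ) (p : ZMod 4 × ZMod 4) : ℝ := 1 / 4 * noise τ (p.1 - p.2)

lemma sum_channelLaw_snd (τ : ℝ) (v : ZMod 4) : ∑ s, channelLaw τ (v, s) = 1 / 4 := by
  simp only [channelLaw, ← Finset.mul_sum, sum_noise_sub_left, mul_one]

lemma sum_channelLaw (τ : ℝ) : ∑ v, ∑ s, channelLaw τ (v, s) = 1 := by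
  simp only [sum_channelLaw_snd, Finset.sum_const, Finset.card_univ, ZMod.card]
  norm_num

lemma condEnt_channelLaw (τ : ℝ) : condEnt (channelLaw τ) = ent (noise τ) := by
  refine (condEnt_mul_kernel (fun _ => 1 / 4) (fun s v => noise τ (v - s))
    (sum_noise_sub_right τ)).trans ?_
  show ∑ s : ZMod 4, 1 / 4 * ent (noise τ ∘ Equiv.subRight s) = _
  simp only [ent_comp_equiv, Finset.sum_const, Finset.card_univ, ZMod.card, nsmul_eq_mul]
  ring

def channelEquiv : Ω ≃ (ZMod 4 × ZMod 4) × (ZMod 4 × ZMod 4) where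
  toFun ω := ((V1 ω, ω.1), (V2 ω, ω.2.1))
  invFun p := (p.1.2, p.2.2, p.1.1 - p.1.2, p.2.1 - p.2.2)
  left_inv ω := by simp [V1, V2]
  right_inv p := by simp [V1, V2]

lemma push_channelEquiv (τ : ℝ) (p q : ZMod 4 × ZMod 4) :
    push τ channelEquiv (p, q) = channelLaw τ p * channelLaw τ q := by
  rw [push_equiv]
  show μ τ (p.2, q.2, p.1 - p.2, q.1 - q.2) = _
  simp only [μ, channelLaw, noise]
  ring

/- Curried in the four coordinates: once `g` is a lambda, each `if` condition beta-reduces together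
with its `Decidable` instance, so that `simp` can still rewrite it. -/
lemma push_eq_sum_channelLaw {β : Type*} [Fintype β] [DecidableEq β] (τ : ℝ)
    (g : ZMod 4 → ZMod 4 → ZMod 4 → ZMod 4 → β) (b : β) :
    push τ (fun ω => g (V1 ω) ω.1 (V2 ω) ω.2.1) b
      = ∑ v₁, ∑ s₁, ∑ v₂, ∑ s₂,
          if g v₁ s₁ v₂ s₂ = b then channelLaw τ (v₁, s₁) * channelLaw τ (v₂, s₂) else 0 := by
  refine (push_comp τ channelEquiv (fun pq => g pq.1.1 pq.1.2 pq.2.1 pq.2.2) b).trans ?_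
  simp only [Fintype.sum_prod_type, push_channelEquiv]

lemma push_V1S1 (τ : ℝ) : push τ (fun ω => (V1 ω, ω.1)) = channelLaw τ := by
  funext ⟨v, s⟩
  refine (push_eq_sum_channelLaw τ (fun v₁ s₁ _ _ => (v₁, s₁)) (v, s)).trans ?_
  simp [ite_and, ← Finset.mul_sum, sum_channelLaw]

lemma push_V2S2 (τ : ℝ) : push τ (fun ω => (V2 ω, ω.2.1)) = channelLaw τ := by
  funext ⟨v, s⟩
  refine (push_eq_sum_channelLaw τ (fun _ _ v₂ s₂ => (v₂, s₂)) (v, s)).trans ?_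
  simp [ite_and, ← Finset.sum_mul, sum_channelLaw]

lemma push_V1 (τ : ℝ) (a : ZMod 4) : push τ V1 a = 1 / 4 := by
  refine (push_eq_sum_channelLaw τ (fun v₁ _ _ _ => v₁) a).trans ?_
  simp [← Finset.mul_sum, ← Finset.sum_mul, sum_channelLaw_snd]

lemma push_V2 (τ : ℝ) (b : ZMod 4) : push τ V2 b = 1 / 4 := by
  refine (push_eq_sum_channelLaw τ (fun _ _ v₂ _ => v₂) b).trans ?_
  simp [← Finset.mul_sum, ← Finset.sum_mul, sum_channelLaw_snd]

lemma push_V1V2 (τ : ℝ) (a b : ZMod 4) : push τ (fun ω => (V1 ω, V2 ω)) (a, b) = 1 / 16 := by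
  refine (push_eq_sum_channelLaw τ (fun v₁ _ v₂ _ => (v₁, v₂)) (a, b)).trans ?_
  simp only [Prod.mk.injEq, ite_and, Finset.sum_ite_irrel, ← Finset.mul_sum, sum_channelLaw_snd,
    Finset.sum_const_zero, Finset.sum_ite_eq', Finset.mem_univ, ↓reduceIte, ← Finset.sum_mul]
  norm_num

/-- Conditionally on `Y = y`, `V₁` is uniform and `V₂ = y - V₁`; this is the resulting law of
`V₁ ⊕ V₂`. -/
def xorGivenSum (y w : ZMod 4) : ℝ := ∑ v, if xor4 v (y - v) = w then 1 / 4 else 0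

lemma sum_xorGivenSum (y : ZMod 4) : ∑ w, xorGivenSum y w = 1 := by
  simp [xorGivenSum, Finset.sum_comm (γ := ZMod 4)]

lemma sum_ent_xorGivenSum : ∑ y, ent (xorGivenSum y) = 2 := by
  have hhalf : logb 2 (1 / 2 : ℝ) = -1 := by
    rw [one_div, logb_inv, logb_self_eq_one one_lt_two]
  simp +decide only [ent, xorGivenSum, ZMod.sum_univ_four, sub_zero, ↓reduceIte, add_zero,
    logb_zero, mul_zero]
  norm_num [hhalf]

lemma push_xor4_Yout (τ : ℝ) :
    push τ (fun ω => (xor4 (V1 ω) (V2 ω), Yout ω)) = fun p => 1 / 4 * xorGivenSum p.2 p.1 := by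
  funext ⟨w, y⟩
  refine (push_eq_sum_channelLaw τ (fun v₁ _ v₂ _ => (xor4 v₁ v₂, v₁ + v₂)) (w, y)).trans ?_
  simp [xorGivenSum, ← eq_sub_iff_add_eq', and_comm (a := xor4 _ _ = w), ite_and,
    ← Finset.sum_mul_sum, sum_channelLaw_snd, Finset.mul_sum]

lemma condEnt_xor4_Yout (τ : ℝ) :
    condEnt (push τ (fun ω => (xor4 (V1 ω) (V2 ω), Yout ω))) = 1 / 2 := by
  rw [push_xor4_Yout]
  refine (condEnt_mul_kernel (fun _ => 1 / 4) xorGivenSum sum_xorGivenSum).trans ?_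
  rw [← Finset.mul_sum, sum_ent_xorGivenSum]
  norm_num

theorem qddmac_field_sum_rate_general (τ : ℝ) :
    condEnt (push τ (fun ω => (V1 ω, ω.1))) =
      -(τ * Real.logb 2 (τ / 3)) - (1 - τ) * Real.logb 2 (1 - τ) ∧
    condEnt (push τ (fun ω => (V2 ω, ω.2.1))) =
      -(τ * Real.logb 2 (τ / 3)) - (1 - τ) * Real.logb 2 (1 - τ) ∧
    (∀ a : ZMod 4, push τ V1 a = 1 / 4) ∧
    (∀ b : ZMod 4, push τ V2 b = 1 / 4) ∧
    (∀ a b : ZMod 4, push τ (fun ω => (V1 ω, V2 ω)) (a, b) =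
      push τ V1 a * push τ V2 b) ∧
    condEnt (push τ (fun ω => (xor4 (V1 ω) (V2 ω), Yout ω))) = 1 / 2 ∧
    min (condEnt (push τ (fun ω => (V1 ω, ω.1))))
        (condEnt (push τ (fun ω => (V2 ω, ω.2.1)))) -
      condEnt (push τ (fun ω => (xor4 (V1 ω) (V2 ω), Yout ω))) =
      -(τ * Real.logb 2 (τ / 3)) - (1 - τ) * Real.logb 2 (1 - τ) - 1 / 2 := by
  have hV1S1 := push_V1S1 τ ▸ condEnt_channelLaw τ
  have hV2S2 := push_V2S2 τ ▸ condEnt_channelLaw τ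
  refine ⟨hV1S1.trans (ent_noise τ), hV2S2.trans (ent_noise τ), push_V1 τ, push_V2 τ,
    fun a b => ?_, condEnt_xor4_Yout τ, ?_⟩
  · rw [push_V1V2, push_V1, push_V2]
    norm_num
  · rw [hV1S1, hV2S2, min_self, condEnt_xor4_Yout, ent_noise]

/-- For the quaternary doubly dirty MAC test channel:
(i) `H(V_j|S_j) = −τ·log₂(τ/3) − (1−τ)·log₂(1−τ)`;
(ii) `V₁, V₂` are independent and each uniform on `ℤ₄`;
(iii) `H(V₁⊕V₂|Y) = 1/2` (⊕ the bitwise XOR);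
and consequently `min{H(V₁|S₁),H(V₂|S₂)} − H(V₁⊕V₂|Y)` equals the displayed value. -/
theorem qddmac_field_sum_rate (τ : ℝ) (h0 : 0 ≤ τ) (h1 : τ ≤ 3 / 4) :
    condEnt (push τ (fun ω => (V1 ω, ω.1))) =
      -(τ * Real.logb 2 (τ / 3)) - (1 - τ) * Real.logb 2 (1 - τ) ∧
    condEnt (push τ (fun ω => (V2 ω, ω.2.1))) =
      -(τ * Real.logb 2 (τ / 3)) - (1 - τ) * Real.logb 2 (1 - τ) ∧
    (∀ a : ZMod 4, push τ V1 a = 1 / 4) ∧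
    (∀ b : ZMod 4, push τ V2 b = 1 / 4) ∧
    (∀ a b : ZMod 4, push τ (fun ω => (V1 ω, V2 ω)) (a, b) =
      push τ V1 a * push τ V2 b) ∧
    condEnt (push τ (fun ω => (xor4 (V1 ω) (V2 ω), Yout ω))) = 1 / 2 ∧
    min (condEnt (push τ (fun ω => (V1 ω, ω.1))))
        (condEnt (push τ (fun ω => (V2 ω, ω.2.1)))) -
      condEnt (push τ (fun ω => (xor4 (V1 ω) (V2 ω), Yout ω))) =
      -(τ * Real.logb 2 (τ / 3)) - (1 - τ) * Real.logb 2 (1 - τ) - 1 / 2 :=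
  qddmac_field_sum_rate_general τ

end Stmt18
end
end
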